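/- arXiv:2203.13014 — 3 statements merged into one kernel-verified Lean document; each statement's English description precedes it below -/
import Mathlib

section
/- The iterated integral satisfies the shuffle product identity: for one-forms pulled back along a path γ to functions f₁,…,f_n and g₁,…,g_m, the product of the iterated integrals ∫_γ ω₁⋯ω_n and ∫_γ ω₁'⋯ω_m' equals the iterated integral of the shuffle product of the words (ω₁⋯ω_n) ⧢ (ω₁'⋯ω_m'). -/
/-!
Write `Φ = iterInt a (x :: xs)` and `Ψ = iterInt a (y :: ys)`: both vanish at `a`, with
derivatives `x · iterInt a xs` and `y · iterInt a ys`. Integrating the product rule gives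
`Φ Ψ = ∫ x · (iterInt a xs · Ψ) + ∫ y · (Φ · iterInt a ys)`; by induction on the total length
the two inner products are sums over shuffles, and integrating against `x`, resp. `y`,
prepends that letter to each of them, which is exactly the recursion defining `shuffles`.
-/

/-- The iterated integral of a word of one-forms along a path, written in terms of
the pullback functions: the head of the list is the outermost integrand. -/
noncomputable def iterInt (a : ℝ) : List (ℝ → ℂ) → ℝ → ℂ
  | [], _ => 1
  | f :: fs, b => ∫ s in a..b, f s * iterInt a fs s

/-- All shuffles of two words. -/
def shuffles {α : Type*} : List α → List α → List (List α)
  | [], ys => [ys]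
  | x :: xs, [] => [x :: xs]
  | x :: xs, y :: ys =>
      (shuffles xs (y :: ys)).map (x :: ·) ++ (shuffles (x :: xs) ys).map (y :: ·)
termination_by xs ys => xs.length + ys.length

open intervalIntegral MeasureTheory

theorem iterInt_cons (a : ℝ) (f : ℝ → ℂ) (fs : List (ℝ → ℂ)) (b : ℝ) :
    iterInt a (f :: fs) b = ∫ s in a..b, f s * iterInt a fs s := rfl

theorem integral_mul_integral_eq_add {φ ψ : ℝ → ℂ} (hφ : Continuous φ) (hψ : Continuous ψ)
    (a b : ℝ) :
    (∫ s in a..b, φ s) * (∫ s in a..b, ψ s)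
      = (∫ s in a..b, φ s * ∫ r in a..s, ψ r) + ∫ s in a..b, ψ s * ∫ r in a..s, φ r := by
  set Φ : ℝ → ℂ := fun t => ∫ r in a..t, φ r
  set Ψ : ℝ → ℂ := fun t => ∫ r in a..t, ψ r
  have hΦ : Continuous Φ := continuous_primitive (fun _ _ => hφ.intervalIntegrable _ _) a
  have hΨ : Continuous Ψ := continuous_primitive (fun _ _ => hψ.intervalIntegrable _ _) a
  have hΦ' (s : ℝ) : HasDerivAt Φ (φ s) s :=
    integral_hasDerivAt_right (hφ.intervalIntegrable a s) (hφ.stronglyMeasurableAtFilter _ _)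
      hφ.continuousAt
  have hΨ' (s : ℝ) : HasDerivAt Ψ (ψ s) s :=
    integral_hasDerivAt_right (hψ.intervalIntegrable a s) (hψ.stronglyMeasurableAtFilter _ _)
      hψ.continuousAt
  have hint₁ : IntervalIntegrable (fun s => φ s * Ψ s) volume a b :=
    (hφ.mul hΨ).intervalIntegrable a b
  have hint₂ : IntervalIntegrable (fun s => ψ s * Φ s) volume a b :=
    (hψ.mul hΦ).intervalIntegrable a b
  have hprod : ∫ s in a..b, (φ s * Ψ s + ψ s * Φ s) = Φ b * Ψ b - Φ a * Ψ a :=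
    integral_eq_sub_of_hasDerivAt
      (fun s _ => ((hΦ' s).mul (hΨ' s)).congr_deriv (by ring)) (hint₁.add hint₂)
  rw [integral_add hint₁ hint₂] at hprod
  simpa [Φ, Ψ] using hprod.symm

theorem continuous_iterInt (a : ℝ) {fs : List (ℝ → ℂ)} (h : ∀ f ∈ fs, Continuous f) :
    Continuous (iterInt a fs) := by
  induction fs with
  | nil => exact continuous_const
  | cons f fs ih =>
    have hfs : Continuous (iterInt a fs) := ih fun g hg => h g (List.mem_cons_of_mem _ hg)
    exact continuous_primitive
      (fun _ _ => ((h f List.mem_cons_self).mul hfs).intervalIntegrable _ _) a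

theorem sum_map_iterInt_cons (a b : ℝ) {f : ℝ → ℂ} (hf : Continuous f)
    {ws : List (List (ℝ → ℂ))} (hws : ∀ w ∈ ws, Continuous (iterInt a w)) :
    (ws.map fun w => iterInt a (f :: w) b).sum
      = ∫ s in a..b, f s * (ws.map fun w => iterInt a w s).sum := by
  induction ws with
  | nil => simp
  | cons w ws ih =>
    have hws' : ∀ v ∈ ws, Continuous (iterInt a v) := fun v hv => hws v (List.mem_cons_of_mem _ hv)
    simp only [List.map_cons, List.sum_cons, mul_add]
    have hint₁ : IntervalIntegrable (fun s => f s * iterInt a w s) volume a b :=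
      (hf.mul (hws w List.mem_cons_self)).intervalIntegrable a b
    have hint₂ : IntervalIntegrable (fun s => f s * (ws.map fun v => iterInt a v s).sum)
        volume a b :=
      (hf.mul (continuous_list_sum ws hws')).intervalIntegrable a b
    rw [integral_add hint₁ hint₂, ih hws']
    rfl

theorem perm_append_of_mem_shuffles {α : Type*} {xs ys w : List α} (hw : w ∈ shuffles xs ys) :
    w.Perm (xs ++ ys) := by
  induction xs, ys using shuffles.induct generalizing w with
  | case1 ys => simp_all [shuffles]
  | case2 x xs => simp_all [shuffles]
  | case3 x xs y ys ih₁ ih₂ =>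
    simp only [shuffles, List.mem_append, List.mem_map] at hw
    rcases hw with ⟨v, hv, rfl⟩ | ⟨v, hv, rfl⟩
    · exact (ih₁ hv).cons x
    · exact ((ih₂ hv).cons y).trans List.perm_middle.symm

theorem continuous_iterInt_of_mem_shuffles (a : ℝ) {fs gs w : List (ℝ → ℂ)}
    (hf : ∀ f ∈ fs, Continuous f) (hg : ∀ g ∈ gs, Continuous g) (hw : w ∈ shuffles fs gs) :
    Continuous (iterInt a w) :=
  continuous_iterInt a fun f hfw => by
    rcases List.mem_append.1 ((perm_append_of_mem_shuffles hw).mem_iff.1 hfw) with h | h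
    exacts [hf f h, hg f h]

theorem iterInt_cons_mul_iterInt_cons (a b : ℝ) {x y : ℝ → ℂ} {xs ys : List (ℝ → ℂ)}
    (hx : Continuous x) (hy : Continuous y)
    (hxs : Continuous (iterInt a xs)) (hys : Continuous (iterInt a ys)) :
    iterInt a (x :: xs) b * iterInt a (y :: ys) b
      = (∫ s in a..b, x s * (iterInt a xs s * iterInt a (y :: ys) s))
        + ∫ s in a..b, y s * (iterInt a (x :: xs) s * iterInt a ys s) := by
  rw [iterInt_cons, iterInt_cons,
    integral_mul_integral_eq_add (φ := fun s => x s * iterInt a xs s)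
      (ψ := fun s => y s * iterInt a ys s) (hx.mul hxs) (hy.mul hys)]
  congr 1 <;> refine integral_congr fun s _ => ?_ <;> simp only [iterInt_cons] <;> ring

/-- Shuffle product identity for iterated integrals: the product of the iterated
integrals of two words equals the sum of the iterated integrals of all their
shuffles. -/
theorem iterInt_shuffle (a b : ℝ) (fs gs : List (ℝ → ℂ))
    (hf : ∀ f ∈ fs, Continuous f) (hg : ∀ g ∈ gs, Continuous g) :
    iterInt a fs b * iterInt a gs b
      = ((shuffles fs gs).map (fun w => iterInt a w b)).sum := by
  induction fs, gs using shuffles.induct generalizing b with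
  | case1 ys => simp [shuffles, iterInt]
  | case2 x xs => simp [shuffles, iterInt]
  | case3 x xs y ys ih₁ ih₂ =>
    have hx := hf x List.mem_cons_self
    have hy := hg y List.mem_cons_self
    have hxs : ∀ f ∈ xs, Continuous f := fun f h => hf f (List.mem_cons_of_mem _ h)
    have hys : ∀ g ∈ ys, Continuous g := fun g h => hg g (List.mem_cons_of_mem _ h)
    rw [iterInt_cons_mul_iterInt_cons a b hx hy (continuous_iterInt a hxs)
      (continuous_iterInt a hys)]
    simp only [fun s => ih₁ s hxs hg, fun s => ih₂ s hf hys]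
    rw [← sum_map_iterInt_cons a b hx fun w hw => continuous_iterInt_of_mem_shuffles a hxs hg hw,
      ← sum_map_iterInt_cons a b hy fun w hw => continuous_iterInt_of_mem_shuffles a hf hys hw,
      shuffles, List.map_append, List.sum_append, List.map_map, List.map_map]
    rfl
end

section
/- For 0 < x < 1 and a tangent-vector regularisation parameter v > 0, the shuffle-regularised iterated integral of dlog ξ followed by dlog(1−ξ)⁻ᵖᵘˡˡᵇᵃᶜᵏ from 0 to x satisfies: ∫_{v⃗₀}^x ω₁ω₂ = log(x/v)·log(1−x) + Li₂(x), where ω₁ = dξ/ξ, ω₂ = dξ/(ξ−1), and Li₂(x) = ∑_{n≥1} xⁿ/n². -/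
open Filter Topology

/-- Real-valued iterated integral of a word of pullback functions; the head of the
list is the outermost integrand, so the word `ω₁ω₂` is the list `[f₂, f₁]`. -/
noncomputable def iterIntR (a : ℝ) : List (ℝ → ℝ) → ℝ → ℝ
  | [], _ => 1
  | f :: fs, b => ∫ s in a..b, f s * iterIntR a fs s

/-- The dilogarithm `Li₂(x) = ∑_{n ≥ 1} xⁿ/n²`. -/
noncomputable def Li2 (x : ℝ) : ℝ := ∑' n : ℕ, x ^ (n + 1) / ((n + 1) : ℝ) ^ 2

/-! With the lower limit cut off at `a = vε`, the inner integral is `log s - log a`, and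
`log s · log (1 - s) + Li₂ s` is a primitive of `log s / (s - 1)` on `(0, 1)`. Hence the
truncated iterated integral is exactly
`log x · log (1 - x) + Li₂ x - log a · log (1 - x) - Li₂ a`. Writing `log a = log v + log ε`,
the counterterm cancels the `log ε` part, and the remainder `Li₂ (vε)` tends to `Li₂ 0 = 0`. -/

open Real

theorem hasDerivAt_Li2_tsum {y : ℝ} (hy : |y| < 1) :
    HasDerivAt Li2 (∑' n : ℕ, y ^ n / (n + 1)) y := by
  obtain ⟨r, hyr, hr1⟩ := exists_between hy
  have hr0 : 0 < r := (abs_nonneg y).trans_lt hyr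
  refine hasDerivAt_tsum_of_isPreconnected (t := Set.Ioo (-r) r) (y₀ := 0)
    (g := fun (n : ℕ) (z : ℝ) => z ^ (n + 1) / ((n + 1) : ℝ) ^ 2)
    (g' := fun (n : ℕ) (z : ℝ) => z ^ n / ((n + 1) : ℝ))
    (summable_geometric_of_lt_one hr0.le hr1) isOpen_Ioo isPreconnected_Ioo
    (fun n z _ => ?_) (fun n z hz => ?_) ⟨neg_neg_of_pos hr0, hr0⟩ ?_ (abs_lt.mp hyr)
  · refine ((hasDerivAt_pow (n + 1) z).div_const (((n : ℝ) + 1) ^ 2)).congr_deriv ?_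
    push_cast
    field_simp
  · have hz' : |z| ≤ r := abs_le.mpr ⟨hz.1.le, hz.2.le⟩
    calc ‖z ^ n / ((n : ℝ) + 1)‖ = |z| ^ n / ((n : ℝ) + 1) := by
          rw [norm_div, norm_pow, Real.norm_eq_abs, Real.norm_of_nonneg (by positivity)]
      _ ≤ |z| ^ n := div_le_self (by positivity) (by simp)
      _ ≤ r ^ n := pow_le_pow_left₀ (abs_nonneg z) hz' n
  · simp

theorem hasSum_pow_div_succ {y : ℝ} (hy : |y| < 1) (hy0 : y ≠ 0) :
    HasSum (fun n : ℕ => y ^ n / (n + 1)) (-log (1 - y) / y) := by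
  have hterm : (fun n : ℕ => y ^ n / (n + 1)) = fun n : ℕ => y ^ (n + 1) / (n + 1) / y :=
    funext fun n => by rw [pow_succ, mul_div_right_comm, mul_div_cancel_right₀ _ hy0]
  exact hterm ▸ (hasSum_pow_div_log_of_abs_lt_one hy).div_const y

theorem hasDerivAt_Li2 {y : ℝ} (hy : |y| < 1) (hy0 : y ≠ 0) :
    HasDerivAt Li2 (-log (1 - y) / y) y :=
  (hasSum_pow_div_succ hy hy0).tsum_eq ▸ hasDerivAt_Li2_tsum hy

theorem continuousAt_Li2_zero : ContinuousAt Li2 0 :=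
  (hasDerivAt_Li2_tsum (by simp)).continuousAt

theorem Li2_zero : Li2 0 = 0 := by simp [Li2]

theorem hasDerivAt_log_mul_log_one_sub_add_Li2 {s : ℝ} (hs0 : 0 < s) (hs1 : s < 1) :
    HasDerivAt (fun t => log t * log (1 - t) + Li2 t) (log s / (s - 1)) s := by
  have hlog1 : HasDerivAt (fun t => log (1 - t)) (-1 / (1 - s)) s :=
    ((hasDerivAt_id' s).const_sub 1).log (by linarith)
  refine (((hasDerivAt_log hs0.ne').mul hlog1).add
    (hasDerivAt_Li2 (abs_lt.mpr ⟨by linarith, hs1⟩) hs0.ne')).congr_deriv ?_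
  -- the `log (1 - s) / s` terms from the product rule and from `Li₂` cancel
  have : s - 1 ≠ 0 := by linarith
  have : 1 - s ≠ 0 := by linarith
  field_simp
  ring

theorem iterIntR_one_div {a s : ℝ} (ha : 0 < a) (hs : 0 < s) :
    iterIntR a [fun t => 1 / t] s = log s - log a := by
  simp only [iterIntR, mul_one]
  rw [integral_one_div_of_pos ha hs, log_div hs.ne' ha.ne']

theorem iterIntR_one_div_sub_one_one_div {a x : ℝ} (ha0 : 0 < a) (ha1 : a < 1) (hx0 : 0 < x)
    (hx1 : x < 1) :
    iterIntR a [fun t => 1 / (t - 1), fun t => 1 / t] x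
      = log x * log (1 - x) + Li2 x - log a * log (1 - x) - Li2 a := by
  have hI : ∀ s ∈ Set.uIcc a x, 0 < s ∧ s < 1 := fun s hs =>
    ⟨lt_of_lt_of_le (lt_min ha0 hx0) hs.1, lt_of_le_of_lt hs.2 (max_lt ha1 hx1)⟩
  have hintegrand : Set.EqOn (fun s => 1 / (s - 1) * iterIntR a [fun t => 1 / t] s)
      (fun s => (log s - log a) / (s - 1)) (Set.uIcc a x) := fun s hs => by
    simp only [iterIntR_one_div ha0 (hI s hs).1]
    ring
  have hderiv : ∀ s ∈ Set.uIcc a x, HasDerivAt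
      (fun t => log t * log (1 - t) + Li2 t - log a * log (1 - t))
      ((log s - log a) / (s - 1)) s := fun s hs => by
    obtain ⟨hs0, hs1⟩ := hI s hs
    refine ((hasDerivAt_log_mul_log_one_sub_add_Li2 hs0 hs1).sub
      ((((hasDerivAt_id' s).const_sub 1).log (by linarith)).const_mul (log a))).congr_deriv ?_
    have : s - 1 ≠ 0 := by linarith
    have : 1 - s ≠ 0 := by linarith
    field_simp
    ring
  have hcont : ContinuousOn (fun s => (log s - log a) / (s - 1)) (Set.uIcc a x) :=
    ((continuousOn_log.mono fun s hs => (hI s hs).1.ne').sub continuousOn_const).div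
      (by fun_prop) fun s hs => by linarith [(hI s hs).2]
  change ∫ s in a..x, 1 / (s - 1) * iterIntR a [fun t => 1 / t] s = _
  rw [intervalIntegral.integral_congr hintegrand,
    intervalIntegral.integral_eq_sub_of_hasDerivAt hderiv hcont.intervalIntegrable]
  ring

/-- Shuffle (tangential base-point) regularisation of `∫_{v⃗₀}^x ω₁ω₂` with
`ω₁ = dξ/ξ` and `ω₂ = dξ/(ξ-1) = dlog(1-ξ)`: cutting off the lower integration
limit at `v·ε`, the divergent iterated integral equals
`log(x/v)·log(1-x) + Li₂(x) + log ε · log(1-x) + o(1)` as `ε → 0⁺`, so its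
regularised (constant) term is `log(x/v)·log(1-x) + Li₂(x)`. -/
theorem regularised_iterated_integral_dilog (x v : ℝ)
    (hx0 : 0 < x) (hx1 : x < 1) (hv : 0 < v) :
    Tendsto
      (fun ε : ℝ =>
        iterIntR (v * ε) [fun t => 1 / (t - 1), fun t => 1 / t] x
          + Real.log ε * Real.log (1 - x))
      (𝓝[>] (0 : ℝ))
      (𝓝 (Real.log (x / v) * Real.log (1 - x) + Li2 x)) := by
  have hcutoff : ∀ᶠ ε in 𝓝[>] (0 : ℝ),
      iterIntR (v * ε) [fun t => 1 / (t - 1), fun t => 1 / t] x + log ε * log (1 - x)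
        = log (x / v) * log (1 - x) + Li2 x - Li2 (v * ε) := by
    filter_upwards [Ioo_mem_nhdsGT (one_div_pos.mpr hv)] with ε ⟨hε0, hε1⟩
    rw [iterIntR_one_div_sub_one_one_div (by positivity) ((lt_div_iff₀' hv).mp hε1) hx0 hx1, log_mul hv.ne' hε0.ne',
      log_div hx0.ne' hv.ne']
    ring
  have hvε : Tendsto (fun ε : ℝ => v * ε) (𝓝[>] 0) (𝓝 0) :=
    tendsto_nhdsWithin_of_tendsto_nhds (by simpa using (continuous_const_mul v).tendsto 0)
  have hLi2 := continuousAt_Li2_zero.tendsto.comp hvε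
  rw [Li2_zero] at hLi2
  simpa using (tendsto_congr' hcutoff).mpr (tendsto_const_nhds.sub hLi2)
end

section
/- The Gauss hypergeometric function satisfies the quadratic twisted period relation: ₂F₁(α,β;γ;x)·₂F₁(1−α,1−β;2−γ;x) = ₂F₁(α+1−γ, β+1−γ; 2−γ; x)·₂F₁(γ−α, γ−β; γ; x), for parameters and x in a domain where all four series converge (e.g. |x| < 1 and no parameter a nonpositive integer). -/
/-!
Apply Euler's transformation `₂F₁(a,b;c;x) = (1-x)^(c-a-b) ₂F₁(c-a,c-b;c;x)` to `(α,β;γ)` and to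
`(1-α,1-β;2-γ)`: both sides of the relation become the same product, up to the factors
`(1-x)^(γ-α-β)` and `(1-x)^(α+β-γ)`, which cancel. Comparing coefficients of the Cauchy product,
Euler's transformation is the Pfaff–Saalschütz summation, proved by a Wilf–Zeilberger recurrence.
-/

/-- The Pochhammer symbol `(a)_n = a (a+1) ⋯ (a+n-1)`. -/
noncomputable def pochhammerC (a : ℂ) (n : ℕ) : ℂ :=
  ∏ k ∈ Finset.range n, (a + k)

/-- The Gauss hypergeometric series `₂F₁(α,β;γ;x) = ∑ₙ (α)ₙ(β)ₙ/((γ)ₙ n!) xⁿ`. -/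
noncomputable def hyp2F1 (α β γ x : ℂ) : ℂ :=
  ∑' n : ℕ, pochhammerC α n * pochhammerC β n / (pochhammerC γ n * (n.factorial : ℂ)) * x ^ n

open Finset Filter Topology
open scoped Nat

theorem pochhammerC_zero (a : ℂ) : pochhammerC a 0 = 1 := by
  simp [pochhammerC]

theorem pochhammerC_succ (a : ℂ) (n : ℕ) : pochhammerC a (n + 1) = pochhammerC a n * (a + n) :=
  prod_range_succ _ n

theorem pochhammerC_succ' (a : ℂ) (n : ℕ) : pochhammerC a (n + 1) = a * pochhammerC (a + 1) n := by
  simp only [pochhammerC, prod_range_succ', Nat.cast_add, Nat.cast_one, Nat.cast_zero, add_zero]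
  rw [mul_comm]
  congr 1
  exact prod_congr rfl fun _ _ => by ring

theorem pochhammerC_add (a : ℂ) (m n : ℕ) :
    pochhammerC a (m + n) = pochhammerC a m * pochhammerC (a + m) n := by
  induction n with
  | zero => simp [pochhammerC_zero]
  | succ n ih =>
    rw [← add_assoc, pochhammerC_succ, ih, pochhammerC_succ]
    push_cast
    ring

theorem pochhammerC_ne_zero {a : ℂ} (h : ∀ k : ℕ, a + k ≠ 0) (n : ℕ) : pochhammerC a n ≠ 0 :=
  prod_ne_zero_iff.2 fun k _ => h k

theorem pochhammerC_one (n : ℕ) : pochhammerC 1 n = n ! := by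
  induction n with
  | zero => simp [pochhammerC_zero]
  | succ n ih => rw [pochhammerC_succ, ih, Nat.factorial_succ]; push_cast; ring

theorem one_add_natCast_ne_zero {R : Type*} [AddCommMonoidWithOne R] [CharZero R] (k : ℕ) :
    (1 : R) + k ≠ 0 := by
  rw [add_comm]
  exact Nat.cast_add_one_ne_zero k

theorem sum_range_succ_choose_mul {R : Type*} [CommSemiring R] (f : ℕ → R) (n : ℕ) :
    ∑ k ∈ range (n + 2), ((n + 1).choose k : R) * f k
      = ∑ k ∈ range (n + 1), (n.choose k : R) * (f k + f (k + 1)) := by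
  have hshift : ∑ k ∈ range (n + 1), (n.choose (k + 1) : R) * f (k + 1) + f 0
      = ∑ k ∈ range (n + 1), (n.choose k : R) * f k := by
    simpa [sum_range_succ _ (n + 1)] using
      (sum_range_succ' (fun k => (n.choose k : R) * f k) (n + 1)).symm
  rw [sum_range_succ']
  simp only [Nat.choose_succ_succ, Nat.cast_add, add_mul, mul_add, sum_add_distrib,
    Nat.choose_zero_right, Nat.cast_one, one_mul, ← hshift]
  ring

section Saalschutz

variable (a b c : ℂ)

noncomputable def saalschutzTerm (n k : ℕ) : ℂ :=
  pochhammerC a k * pochhammerC b k * pochhammerC (c - a - b) (n - k) * pochhammerC (c + k) (n - k)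

noncomputable def saalschutzSum (n : ℕ) : ℂ :=
  ∑ k ∈ range (n + 1), n.choose k * saalschutzTerm a b c n k

/-- Wilf–Zeilberger certificate: it makes the recurrence `saalschutzSum_succ` telescope. -/
noncomputable def saalschutzCert (n k : ℕ) : ℂ :=
  -(k * (k + c)) * n.choose k * saalschutzTerm a b (c + 1) n k

theorem choose_mul_saalschutzTerm_add {n k : ℕ} (hk : k ≤ n) :
    n.choose k * (saalschutzTerm a b c (n + 1) k + saalschutzTerm a b c (n + 1) (k + 1))
      = (c - a) * (c - b) * (n.choose k * saalschutzTerm a b (c + 1) n k)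
        + (saalschutzCert a b c n (k + 1) - saalschutzCert a b c n k) := by
  obtain ⟨j, rfl⟩ := Nat.exists_eq_add_of_le hk
  rcases j with _ | m
  · simp only [saalschutzTerm, saalschutzCert, Nat.add_zero, Nat.sub_self,
      Nat.add_sub_cancel_left, Nat.choose_succ_self, Nat.choose_self, pochhammerC_zero,
      pochhammerC_succ a k, pochhammerC_succ b k, pochhammerC_succ _ 0]
    push_cast
    ring
  · simp only [saalschutzTerm, saalschutzCert, show k + (m + 1) + 1 - k = m + 2 by omega,
      show k + (m + 1) + 1 - (k + 1) = m + 1 by omega, Nat.add_sub_cancel_left,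
      show k + (m + 1) - (k + 1) = m by omega]
    have hchoose : ((k + (m + 1)).choose (k + 1) : ℂ) * (k + 1)
        = ((k + (m + 1)).choose k : ℂ) * (m + 1) := by
      have h := Nat.choose_succ_right_eq (k + (m + 1)) k
      rw [Nat.add_sub_cancel_left] at h
      exact_mod_cast h
    -- Expand every Pochhammer symbol over `(a)ₖ, (b)ₖ, (c+1-a-b)ₘ, (c+k+2)ₘ`: what remains is a
    -- polynomial identity modulo `hchoose`.
    have hs₁ : pochhammerC (c - a - b) (m + 1) = (c - a - b) * pochhammerC (c + 1 - a - b) m := by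
      rw [pochhammerC_succ']; ring_nf
    have hs₂ : pochhammerC (c - a - b) (m + 2)
        = (c - a - b) * pochhammerC (c + 1 - a - b) m * (c - a - b + (m + 1)) := by
      rw [pochhammerC_succ, hs₁]; push_cast; ring
    have hck₁ : pochhammerC (c + (k + 1 : ℕ)) (m + 1)
        = (c + (k + 1)) * pochhammerC (c + 1 + (k + 1 : ℕ)) m := by
      rw [pochhammerC_succ']; push_cast; ring_nf
    have hck₂ : pochhammerC (c + k) (m + 2)
        = (c + k) * ((c + (k + 1)) * pochhammerC (c + 1 + (k + 1 : ℕ)) m) := by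
      rw [pochhammerC_succ', ← hck₁]; push_cast; ring_nf
    have hs₁' := pochhammerC_succ (c + 1 - a - b) m
    have hck₁' : pochhammerC (c + 1 + k) (m + 1)
        = (c + 1 + k) * pochhammerC (c + 1 + (k + 1 : ℕ)) m := by
      rw [pochhammerC_succ']; push_cast; ring_nf
    rw [pochhammerC_succ a k, pochhammerC_succ b k, hs₁, hs₂, hck₁, hck₂, hs₁', hck₁']
    push_cast
    linear_combination ((k + 1 + c) * (pochhammerC a k * (a + k)) * (pochhammerC b k * (b + k))
      * pochhammerC (c + 1 - a - b) m * pochhammerC (c + 1 + (k + 1)) m) * hchoose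

theorem saalschutzSum_succ (n : ℕ) :
    saalschutzSum a b c (n + 1) = (c - a) * (c - b) * saalschutzSum a b (c + 1) n := by
  have hcert_ends : saalschutzCert a b c n (n + 1) = 0 ∧ saalschutzCert a b c n 0 = 0 := by
    simp [saalschutzCert]
  rw [saalschutzSum, sum_range_succ_choose_mul,
    sum_congr rfl fun k hk => choose_mul_saalschutzTerm_add a b c (mem_range_succ_iff.1 hk),
    sum_add_distrib, sum_range_sub, hcert_ends.1, hcert_ends.2, ← mul_sum, saalschutzSum]
  ring

theorem saalschutzSum_eq (n : ℕ) :
    saalschutzSum a b c n = pochhammerC (c - a) n * pochhammerC (c - b) n := by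
  induction n generalizing c with
  | zero => simp [saalschutzSum, saalschutzTerm, pochhammerC_zero]
  | succ n ih =>
    rw [saalschutzSum_succ, ih, pochhammerC_succ' (c - a), pochhammerC_succ' (c - b)]
    ring_nf

end Saalschutz

noncomputable def hyp2F1Coeff (a b c : ℂ) (n : ℕ) : ℂ :=
  pochhammerC a n * pochhammerC b n / (pochhammerC c n * n !)

theorem hyp2F1_eq_tsum (a b c x : ℂ) : hyp2F1 a b c x = ∑' n, hyp2F1Coeff a b c n * x ^ n := rfl

theorem hyp2F1Coeff_one_one (s : ℂ) (n : ℕ) : hyp2F1Coeff s 1 1 n = pochhammerC s n / n ! := by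
  have : (n ! : ℂ) ≠ 0 := Nat.cast_ne_zero.2 (Nat.factorial_ne_zero n)
  rw [hyp2F1Coeff, pochhammerC_one]
  field_simp

theorem sum_hyp2F1Coeff_mul_hyp2F1Coeff_one_one {a b c : ℂ} (hc : ∀ k : ℕ, c + k ≠ 0) (n : ℕ) :
    ∑ k ∈ range (n + 1), hyp2F1Coeff a b c k * hyp2F1Coeff (c - a - b) 1 1 (n - k)
      = hyp2F1Coeff (c - a) (c - b) c n := by
  have hterm : ∀ k ∈ range (n + 1), hyp2F1Coeff a b c k * hyp2F1Coeff (c - a - b) 1 1 (n - k)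
      = n.choose k * saalschutzTerm a b c n k / (pochhammerC c n * n !) := by
    intro k hk
    have hkn := mem_range_succ_iff.1 hk
    have hpoch : pochhammerC c n = pochhammerC c k * pochhammerC (c + k) (n - k) := by
      rw [← pochhammerC_add, Nat.add_sub_cancel' hkn]
    have hfact : (n ! : ℂ) = n.choose k * k ! * (n - k)! := by
      exact_mod_cast (Nat.choose_mul_factorial_mul_factorial hkn).symm
    have hck : pochhammerC c k ≠ 0 := pochhammerC_ne_zero hc k
    have hcnk : pochhammerC (c + k) (n - k) ≠ 0 :=
      pochhammerC_ne_zero (fun j => by simpa [add_assoc] using hc (k + j)) _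
    have hchoose : (n.choose k : ℂ) ≠ 0 := by exact_mod_cast (Nat.choose_pos hkn).ne'
    rw [hyp2F1Coeff_one_one, hyp2F1Coeff, saalschutzTerm, hpoch, hfact]
    field_simp
  rw [sum_congr rfl hterm, ← sum_div, ← saalschutzSum, saalschutzSum_eq, hyp2F1Coeff]

theorem hyp2F1Coeff_succ {a b c : ℂ} (hc : ∀ k : ℕ, c + k ≠ 0) (n : ℕ) :
    hyp2F1Coeff a b c (n + 1)
      = hyp2F1Coeff a b c n * ((a + n) / (c + n) * ((b + n) / (1 + n))) := by
  have h₁ : pochhammerC c n ≠ 0 := pochhammerC_ne_zero hc n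
  have h₂ : c + n ≠ 0 := hc n
  have h₃ : (1 + n : ℂ) ≠ 0 := one_add_natCast_ne_zero n
  have h₄ : (n ! : ℂ) ≠ 0 := Nat.cast_ne_zero.2 (Nat.factorial_ne_zero n)
  rw [hyp2F1Coeff, hyp2F1Coeff, pochhammerC_succ a, pochhammerC_succ b, pochhammerC_succ c,
    Nat.factorial_succ]
  push_cast
  field_simp
  ring

theorem summable_norm_hyp2F1Coeff_mul_pow (a b : ℂ) {c x : ℂ} (hc : ∀ k : ℕ, c + k ≠ 0)
    (hx : ‖x‖ < 1) : Summable fun n => ‖hyp2F1Coeff a b c n * x ^ n‖ := by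
  have hratio :
      Tendsto (fun n : ℕ => (a + n) / (c + n) * ((b + n) / (1 + n)) * x) atTop (𝓝 x) := by
    have h := fun u v : ℂ => tendsto_add_mul_div_add_mul_atTop_nhds u v (1 : ℂ) one_ne_zero
    simpa using ((h a c).mul (h b 1)).mul_const x
  obtain ⟨r, hxr, hr1⟩ := exists_between hx
  refine summable_of_ratio_norm_eventually_le hr1 ?_
  filter_upwards [hratio.norm.eventually_le_const hxr] with n hn
  rw [norm_norm, norm_norm, hyp2F1Coeff_succ hc, pow_succ, mul_comm r]
  calc ‖hyp2F1Coeff a b c n * ((a + n) / (c + n) * ((b + n) / (1 + n))) * (x ^ n * x)‖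
      = ‖hyp2F1Coeff a b c n * x ^ n‖ * ‖(a + n) / (c + n) * ((b + n) / (1 + n)) * x‖ := by
        rw [← norm_mul]; ring_nf
    _ ≤ ‖hyp2F1Coeff a b c n * x ^ n‖ * r := by gcongr

/-- Euler's transformation: `hyp2F1 s 1 1 x` is the binomial series of `(1 - x)⁻ˢ`. -/
theorem hyp2F1_mul_hyp2F1_one_one {a b c x : ℂ} (hc : ∀ k : ℕ, c + k ≠ 0) (hx : ‖x‖ < 1) :
    hyp2F1 a b c x * hyp2F1 (c - a - b) 1 1 x = hyp2F1 (c - a) (c - b) c x := by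
  rw [hyp2F1_eq_tsum, hyp2F1_eq_tsum, hyp2F1_eq_tsum,
    tsum_mul_tsum_eq_tsum_sum_range_of_summable_norm (summable_norm_hyp2F1Coeff_mul_pow a b hc hx)
      (summable_norm_hyp2F1Coeff_mul_pow _ 1 one_add_natCast_ne_zero hx)]
  refine tsum_congr fun n => ?_
  rw [← sum_hyp2F1Coeff_mul_hyp2F1Coeff_one_one hc, sum_mul]
  refine sum_congr rfl fun k hk => ?_
  rw [← Nat.add_sub_cancel' (mem_range_succ_iff.1 hk), pow_add, Nat.add_sub_cancel_left]
  ring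

theorem hyp2F1_zero_snd (a c x : ℂ) : hyp2F1 a 0 c x = 1 := by
  rw [hyp2F1_eq_tsum, tsum_eq_single 0 fun n hn => ?_]
  · simp [hyp2F1Coeff, pochhammerC_zero]
  · obtain ⟨m, rfl⟩ := Nat.exists_eq_succ_of_ne_zero hn
    simp [hyp2F1Coeff, pochhammerC_succ']

/-- `(1 - x)⁻ˢ (1 - x)ˢ = 1`. -/
theorem hyp2F1_one_one_mul_neg (s : ℂ) {x : ℂ} (hx : ‖x‖ < 1) :
    hyp2F1 s 1 1 x * hyp2F1 (-s) 1 1 x = 1 := by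
  simpa [hyp2F1_zero_snd] using hyp2F1_mul_hyp2F1_one_one (a := s) (b := 1)
    one_add_natCast_ne_zero hx

/-- The twisted period relation (Cho–Matsumoto) for the Gauss hypergeometric
function: `₂F₁(α,β;γ;x) ₂F₁(1-α,1-β;2-γ;x)
  = ₂F₁(α+1-γ,β+1-γ;2-γ;x) ₂F₁(γ-α,γ-β;γ;x)` for `|x| < 1` and `γ`, `2-γ` not
nonpositive integers. -/
theorem twisted_period_relation_2F1 (α β γ x : ℂ)
    (hx : ‖x‖ < 1)
    (hγ : ∀ n : ℕ, γ ≠ -(n : ℂ))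
    (hγ' : ∀ n : ℕ, 2 - γ ≠ -(n : ℂ)) :
    hyp2F1 α β γ x * hyp2F1 (1 - α) (1 - β) (2 - γ) x
      = hyp2F1 (α + 1 - γ) (β + 1 - γ) (2 - γ) x * hyp2F1 (γ - α) (γ - β) γ x := by
  have hγ₀ : ∀ k : ℕ, γ + k ≠ 0 := fun k hk => hγ k (by linear_combination hk)
  have hγ₁ : ∀ k : ℕ, 2 - γ + k ≠ 0 := fun k hk => hγ' k (by linear_combination hk)
  have euler₀ := hyp2F1_mul_hyp2F1_one_one (a := α) (b := β) hγ₀ hx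
  have euler₁ := hyp2F1_mul_hyp2F1_one_one (a := 1 - α) (b := 1 - β) hγ₁ hx
  have inverse := hyp2F1_one_one_mul_neg (γ - α - β) hx
  rw [show 2 - γ - (1 - α) - (1 - β) = -(γ - α - β) by ring,
    show 2 - γ - (1 - α) = α + 1 - γ by ring, show 2 - γ - (1 - β) = β + 1 - γ by ring] at euler₁
  rw [← euler₀, ← euler₁]
  linear_combination (-(hyp2F1 α β γ x * hyp2F1 (1 - α) (1 - β) (2 - γ) x)) * inverse
end
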